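/- arXiv:2511.21074 — 2 statements merged into one kernel-verified Lean document; each statement's English description precedes it below -/
import Mathlib

section
/- Let S_1, S_2, … be an i.i.d. sequence of random vectors in ℝ^p with E[S_i] = 0 and ‖S_i‖₂ ≤ κ almost surely, whose second-moment matrix M = E[S_i S_iᵀ] has rank n with nonzero eigenvalues D_1 > D_2 > … > D_n > 0. For each N let d_1 ≥ … ≥ d_n be the nonzero singular values of S_samp = [S_1, …, S_N] ∈ ℝ^{p×N}, so that the nonzero eigenvalues of M̂ = (1/N) S_samp S_sampᵀ are d_i²/N. Then for every ε > 0 there exist constants C, c > 0 such that for all N, Pr( max_{1≤i≤n} | d_i/√N − √(D_i) | > ε ) ≤ C N^{−c}. -/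
/-!
Each entry of `M̂ = (1/N) S_samp S_sampᵀ` is the mean of `N` i.i.d. variables bounded by `κ²`,
so by Chebyshev it is `s`-close to the entry of `M` outside an event of probability
`κ⁴ / (N s²)`; a union bound over the `p²` entries gives the rate `N⁻¹`.
Off that event `‖(M̂ - M) v‖ ≤ p s ‖v‖`, and expanding an eigenvector of `M` in an orthonormal
eigenbasis of the symmetric `M̂` shows that each `D_i` is within `p s` of an eigenvalue of `M̂`.
Once `p s` is below `D_n` and below half of every gap `D_i - D_j`, this matching has to be
the order-preserving one, so `|d_i² / N - D_i| ≤ p s`, and `|√a - √b| ≤ |a - b| / √b` passes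
to the singular values.
-/

open MeasureTheory ProbabilityTheory Matrix Polynomial Filter Topology

section Spectral

open scoped InnerProductSpace

variable {𝕜 E : Type*} [RCLike 𝕜] [NormedAddCommGroup E] [InnerProductSpace 𝕜 E]
  [FiniteDimensional 𝕜 E]

theorem LinearMap.IsSymmetric.exists_abs_eigenvalues_sub_le {T : E →ₗ[𝕜] E}
    (hT : T.IsSymmetric) {n : ℕ} (hn : Module.finrank 𝕜 E = n) {r c : ℝ} {v : E} (hv : v ≠ 0)
    (h : ‖T v - (r : 𝕜) • v‖ ≤ c * ‖v‖) : ∃ i, |hT.eigenvalues hn i - r| ≤ c := by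
  set b := hT.eigenvectorBasis hn
  have hcoord : ∀ i, ⟪b i, T v - (r : 𝕜) • v⟫_𝕜 =
      ((hT.eigenvalues hn i - r : ℝ) : 𝕜) * ⟪b i, v⟫_𝕜 := fun i => by
    rw [inner_sub_right, inner_smul_right, ← hT, hT.apply_eigenvectorBasis, inner_smul_left,
      RCLike.conj_ofReal]
    push_cast
    ring
  obtain ⟨i₀, hi₀⟩ : ∃ i, ⟪b i, v⟫_𝕜 ≠ 0 := by
    by_contra! h₀
    exact hv (b.toBasis.ext_elem_iff.2 fun i => by simp [b.repr_apply_apply, h₀])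
  have hc : 0 ≤ c := nonneg_of_mul_nonneg_left ((norm_nonneg _).trans h) (norm_pos_iff.2 hv)
  by_contra! hfar
  have hlt : (c * ‖v‖) ^ 2 < ‖T v - (r : 𝕜) • v‖ ^ 2 := by
    rw [mul_pow, ← b.sum_sq_norm_inner_right, ← b.sum_sq_norm_inner_right, Finset.mul_sum]
    refine Finset.sum_lt_sum (fun i _ => ?_) ⟨i₀, Finset.mem_univ _, ?_⟩ <;>
      rw [hcoord, norm_mul, mul_pow, RCLike.norm_ofReal]
    · gcongr
      exact (hfar i).le
    · gcongr
      exact hfar i₀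
  exact (pow_le_pow_left₀ (norm_nonneg _) h 2).not_gt hlt

theorem LinearMap.IsSymmetric.exists_hasEigenvalue_abs_sub_le {T S : E →ₗ[𝕜] E}
    (hT : T.IsSymmetric) {r c : ℝ} (hS : Module.End.HasEigenvalue S (r : 𝕜))
    (hTS : ∀ v, ‖T v - S v‖ ≤ c * ‖v‖) :
    ∃ μ : ℝ, Module.End.HasEigenvalue T (μ : 𝕜) ∧ |μ - r| ≤ c := by
  obtain ⟨v, hv⟩ := hS.exists_hasEigenvector
  obtain ⟨i, hi⟩ :=
    hT.exists_abs_eigenvalues_sub_le rfl hv.2 (by simpa [hv.apply_eq_smul] using hTS v)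
  exact ⟨_, hT.hasEigenvalue_eigenvalues rfl i, hi⟩

end Spectral

theorem Matrix.charpoly_toEuclideanLin {𝕜 n : Type*} [RCLike 𝕜] [Fintype n] [DecidableEq n]
    (A : Matrix n n 𝕜) : (toEuclideanLin A).charpoly = A.charpoly := by
  change (toLpLin 2 2 A).charpoly = _
  rw [toLpLin_eq_toLin, charpoly_toLin]

theorem Matrix.norm_toEuclideanLin_le_of_abs_le {n : Type*} [Fintype n] [DecidableEq n]
    {A : Matrix n n ℝ} {c : ℝ} (hc : 0 ≤ c) (hA : ∀ i j, |A i j| ≤ c) (v : EuclideanSpace ℝ n) :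
    ‖toEuclideanLin A v‖ ≤ Fintype.card n * c * ‖v‖ := by
  have hrow : ∀ i, (A *ᵥ v) i ^ 2 ≤ Fintype.card n * c ^ 2 * ‖v‖ ^ 2 := fun i => calc
    (A *ᵥ v) i ^ 2 ≤ (∑ j, A i j ^ 2) * ∑ j, v j ^ 2 := Finset.sum_mul_sq_le_sq_mul_sq _ _ _
    _ ≤ (∑ _j : n, c ^ 2) * ‖v‖ ^ 2 := by
      rw [EuclideanSpace.norm_sq_eq]
      gcongr (∑ j, ?_) * ∑ j, ?_ with j _ j
      · exact sq_le_sq' (abs_le.1 (hA i j)).1 (abs_le.1 (hA i j)).2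
      · simp
    _ = Fintype.card n * c ^ 2 * ‖v‖ ^ 2 := by simp
  rw [← pow_le_pow_iff_left₀ (norm_nonneg _) (by positivity) two_ne_zero,
    EuclideanSpace.norm_sq_eq]
  calc ∑ i, ‖(toEuclideanLin A v) i‖ ^ 2 ≤ ∑ _i : n, Fintype.card n * c ^ 2 * ‖v‖ ^ 2 := by
        gcongr with i
        simpa [toLpLin_apply] using hrow i
    _ = (Fintype.card n * c * ‖v‖) ^ 2 := by simp; ring

theorem Matrix.IsHermitian.exists_isRoot_charpoly_abs_sub_le {n : Type*} [Fintype n]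
    [DecidableEq n] {A B : Matrix n n ℝ} (hA : A.IsHermitian) {r c : ℝ}
    (hB : B.charpoly.IsRoot r) (hc : 0 ≤ c) (hAB : ∀ i j, |A i j - B i j| ≤ c) :
    ∃ μ, A.charpoly.IsRoot μ ∧ |μ - r| ≤ Fintype.card n * c := by
  simp_rw [← charpoly_toEuclideanLin, ← Module.End.hasEigenvalue_iff_isRoot_charpoly] at hB ⊢
  refine (isSymmetric_toEuclideanLin_iff.2 hA).exists_hasEigenvalue_abs_sub_le hB fun v => ?_
  simpa [← LinearMap.sub_apply, ← map_sub] using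
    norm_toEuclideanLin_le_of_abs_le hc (by simpa using hAB) v

theorem Polynomial.eq_zero_or_exists_eq_of_isRoot_prod_mul_X_pow {R ι : Type*} [CommRing R]
    [IsDomain R] {s : Finset ι} {a : ι → R} {k : ℕ} {x : R}
    (h : ((∏ i ∈ s, (X - C (a i))) * X ^ k).IsRoot x) : x = 0 ∨ ∃ i ∈ s, x = a i := by
  simp only [IsRoot, eval_mul, eval_prod, eval_sub, eval_X, eval_C, eval_pow, mul_eq_zero,
    Finset.prod_eq_zero_iff, sub_eq_zero, pow_eq_zero_iff', ne_eq] at h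
  tauto

theorem abs_sub_le_of_forall_exists_abs_sub_le {α : Type*} [LinearOrder α] [Finite α]
    {D e : α → ℝ} {t : ℝ} (he : Antitone e) (hgap : ∀ i j, i < j → 2 * t < D i - D j)
    (hnear : ∀ i, ∃ k, |e k - D i| ≤ t) (i : α) : |e i - D i| ≤ t := by
  choose g hg using hnear
  have hg_mono : StrictMono g := fun i j hij => by
    by_contra! hji
    linarith [he hji, hgap i j hij, abs_le.1 (hg i), abs_le.1 (hg j)]
  simpa [hg_mono.apply_eq] using hg i

theorem abs_sub_le_of_charpoly_eq_of_abs_sub_le {p n k l : ℕ} {A B : Matrix (Fin p) (Fin p) ℝ}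
    (hA : A.IsHermitian) {D e : Fin n → ℝ} (he : Antitone e)
    (hAc : A.charpoly = (∏ i, (X - C (e i))) * X ^ k)
    (hBc : B.charpoly = (∏ i, (X - C (D i))) * X ^ l) {s : ℝ} (hs : 0 ≤ s)
    (hAB : ∀ a b, |A a b - B a b| ≤ s) (hgap : ∀ i j, i < j → 2 * (p * s) < D i - D j)
    (hpos : ∀ i, p * s < D i) (i : Fin n) : |e i - D i| ≤ p * s := by
  refine abs_sub_le_of_forall_exists_abs_sub_le he hgap (fun i => ?_) i
  have hroot : B.charpoly.IsRoot (D i) := by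
    simp only [hBc, IsRoot, eval_mul, eval_prod, eval_sub, eval_X, eval_C]
    rw [Finset.prod_eq_zero (Finset.mem_univ i) (sub_self _), zero_mul]
  obtain ⟨μ, hμ, hμi⟩ := hA.exists_isRoot_charpoly_abs_sub_le hroot hs hAB
  rw [hAc] at hμ
  rw [Fintype.card_fin] at hμi
  rcases eq_zero_or_exists_eq_of_isRoot_prod_mul_X_pow hμ with rfl | ⟨j, -, rfl⟩
  · linarith [hpos i, neg_abs_le (0 - D i)]
  · exact ⟨j, hμi⟩

theorem abs_sqrt_sub_sqrt_le {x y : ℝ} (hx : 0 ≤ x) (hy : 0 < y) :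
    |√x - √y| ≤ |x - y| / √y := by
  rw [le_div_iff₀ (Real.sqrt_pos.2 hy)]
  calc |√x - √y| * √y ≤ |√x - √y| * (√x + √y) := by
        gcongr
        exact le_add_of_nonneg_left (Real.sqrt_nonneg x)
    _ = |x - y| := by
      rw [← abs_of_nonneg (by positivity : 0 ≤ √x + √y), ← abs_mul]
      ring_nf
      rw [Real.sq_sqrt hx, Real.sq_sqrt hy.le]

noncomputable def sampleSecondMoment {Ω ι : Type*} (S : ℕ → Ω → ι → ℝ) (N : ℕ) (ω : Ω) :
    Matrix ι ι ℝ :=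
  Matrix.of fun a b => (N : ℝ)⁻¹ * ∑ i ∈ Finset.range N, S i ω a * S i ω b

theorem isHermitian_sampleSecondMoment {Ω ι : Type*} (S : ℕ → Ω → ι → ℝ) (N : ℕ) (ω : Ω) :
    (sampleSecondMoment S N ω).IsHermitian :=
  IsHermitian.ext fun a b => by simp [sampleSecondMoment, mul_comm]

section Sampling

variable {Ω : Type*} [MeasurableSpace Ω] {μ : Measure Ω} [IsProbabilityMeasure μ]

theorem meas_le_abs_sampleMean_sub_le {Y : ℕ → Ω → ℝ} (hindep : iIndepFun Y μ)
    (hident : ∀ i, IdentDistrib (Y i) (Y 0) μ μ) {K : ℝ} (hbound : ∀ i, ∀ᵐ ω ∂μ, |Y i ω| ≤ K)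
    {N : ℕ} (hN : N ≠ 0) {s : ℝ} (hs : 0 < s) :
    μ {ω | s ≤ |(N : ℝ)⁻¹ * ∑ i ∈ Finset.range N, Y i ω - μ[Y 0]|} ≤
      ENNReal.ofReal (K ^ 2 / (N * s ^ 2)) := by
  have hmemLp : ∀ i, MemLp (Y i) 2 μ := fun i =>
    (memLp_top_of_bound (hident i).aemeasurable_fst.aestronglyMeasurable K
      (by simpa using hbound i)).mono_exponent le_top
  set Ybar : Ω → ℝ := (N : ℝ)⁻¹ • ∑ i ∈ Finset.range N, Y i with hYbar
  have hYbar_apply : ∀ ω, Ybar ω = (N : ℝ)⁻¹ * ∑ i ∈ Finset.range N, Y i ω := by simp [hYbar]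
  have hmean : μ[Ybar] = μ[Y 0] := by
    simp_rw [hYbar_apply, integral_const_mul,
      integral_finsetSum _ fun i _ => (hmemLp i).integrable one_le_two, (hident _).integral_eq]
    rw [Finset.sum_const, Finset.card_range, nsmul_eq_mul]
    field_simp
  have hvar : variance Ybar μ ≤ K ^ 2 / N := by
    rw [hYbar, variance_smul, IndepFun.variance_sum (fun i _ => hmemLp i)
      fun i _ j _ hij => hindep.indepFun hij]
    calc (N : ℝ)⁻¹ ^ 2 * ∑ i ∈ Finset.range N, variance (Y i) μ
        ≤ (N : ℝ)⁻¹ ^ 2 * ∑ _i ∈ Finset.range N, ((K - -K) / 2) ^ 2 := by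
          gcongr with i
          exact variance_le_sq_of_bounded ((hbound i).mono fun ω h => abs_le.1 h)
            (hident i).aemeasurable_fst
      _ = K ^ 2 / N := by
          rw [Finset.sum_const, Finset.card_range, nsmul_eq_mul]
          field_simp
          ring
  have hYbar_memLp : MemLp Ybar 2 μ := (memLp_finsetSum' _ fun i _ => hmemLp i).const_smul _
  calc μ {ω | s ≤ |(N : ℝ)⁻¹ * ∑ i ∈ Finset.range N, Y i ω - μ[Y 0]|}
      = μ {ω | s ≤ |Ybar ω - μ[Ybar]|} := by rw [hmean]; simp only [hYbar_apply]
    _ ≤ ENNReal.ofReal (variance Ybar μ / s ^ 2) := meas_ge_le_variance_div_sq hYbar_memLp hs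
    _ ≤ ENNReal.ofReal (K ^ 2 / (N * s ^ 2)) := by
      rw [← div_div]
      gcongr

theorem meas_exists_le_abs_sampleSecondMoment_sub_le {ι : Type*} [Fintype ι]
    {S : ℕ → Ω → ι → ℝ} (hindep : iIndepFun S μ) (hident : ∀ i, IdentDistrib (S i) (S 0) μ μ)
    {κ : ℝ} (hbound : ∀ i, ∀ᵐ ω ∂μ, √(∑ k, S i ω k ^ 2) ≤ κ) {N : ℕ} (hN : N ≠ 0) {s : ℝ}
    (hs : 0 < s) :
    μ {ω | ∃ a b, s ≤ |sampleSecondMoment S N ω a b - ∫ ω', S 0 ω' a * S 0 ω' b ∂μ|} ≤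
      ENNReal.ofReal (Fintype.card ι ^ 2 * (κ ^ 2) ^ 2 / (N * s ^ 2)) := by
  have hentry : ∀ a b, μ {ω | s ≤ |sampleSecondMoment S N ω a b -
      ∫ ω', S 0 ω' a * S 0 ω' b ∂μ|} ≤ ENNReal.ofReal ((κ ^ 2) ^ 2 / (N * s ^ 2)) := by
    intro a b
    have hg : Measurable fun x : ι → ℝ => x a * x b := by fun_prop
    refine meas_le_abs_sampleMean_sub_le (hindep.comp _ fun _ => hg)
      (fun i => (hident i).comp hg) (fun i => ?_) hN hs
    filter_upwards [hbound i] with ω hω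
    have hcoord : ∀ k, |S i ω k| ≤ κ := fun k => (Real.abs_le_sqrt
      (Finset.single_le_sum (fun k _ => sq_nonneg (S i ω k)) (Finset.mem_univ k))).trans hω
    change |S i ω a * S i ω b| ≤ κ ^ 2
    rw [abs_mul, sq]
    exact mul_le_mul (hcoord a) (hcoord b) (abs_nonneg _) ((abs_nonneg _).trans (hcoord a))
  calc μ {ω | ∃ a b, s ≤ |sampleSecondMoment S N ω a b - ∫ ω', S 0 ω' a * S 0 ω' b ∂μ|}
      ≤ ∑ a, ∑ b,
          μ {ω | s ≤ |sampleSecondMoment S N ω a b - ∫ ω', S 0 ω' a * S 0 ω' b ∂μ|} := by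
        simp_rw [Set.ofPred_exists]
        exact (measure_iUnion_fintype_le μ _).trans
          (Finset.sum_le_sum fun a _ => measure_iUnion_fintype_le μ _)
    _ ≤ ∑ _a : ι, ∑ _b : ι, ENNReal.ofReal ((κ ^ 2) ^ 2 / (N * s ^ 2)) := by
        gcongr with a _ b _
        exact hentry a b
    _ = ENNReal.ofReal (Fintype.card ι ^ 2 * (κ ^ 2) ^ 2 / (N * s ^ 2)) := by
        have hnonneg : 0 ≤ (κ ^ 2) ^ 2 / (N * s ^ 2) := by positivity
        simp_rw [← ENNReal.ofReal_sum_of_nonneg fun _ _ => hnonneg,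
          ← ENNReal.ofReal_sum_of_nonneg fun _ _ => Finset.sum_nonneg fun _ _ => hnonneg]
        congr 1
        simp only [Finset.sum_const, Finset.card_univ, nsmul_eq_mul]
        ring

end Sampling

theorem StrictAnti.exists_pos_forall_lt {α : Type*} [LinearOrder α] [Finite α] {D : α → ℝ}
    (hD : StrictAnti D) {f : α → ℝ} (hf : ∀ i, 0 < f i) (c : ℝ) :
    ∃ s > 0, (∀ i j, i < j → 2 * (c * s) < D i - D j) ∧ ∀ i, c * s < f i := by
  have hsmall : ∀ {a : ℝ}, 0 < a → ∀ᶠ s in 𝓝[>] (0 : ℝ), 2 * (c * s) < a := fun ha =>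
    (Continuous.tendsto' (by fun_prop) 0 0 (by simp)).mono_left nhdsWithin_le_nhds
      |>.eventually_lt_const ha
  have hgap : ∀ i j, ∀ᶠ s in 𝓝[>] (0 : ℝ), i < j → 2 * (c * s) < D i - D j := fun i j => by
    by_cases hij : i < j
    · exact (hsmall (sub_pos.2 (hD hij))).mono fun _ h _ => h
    · exact .of_forall fun _ h => absurd h hij
  have hbound : ∀ i, ∀ᶠ s in 𝓝[>] (0 : ℝ), c * s < f i := fun i =>
    (hsmall (hf i)).mono fun s h => by linarith [hf i]
  have hpos : ∀ᶠ s in 𝓝[>] (0 : ℝ), 0 < s := self_mem_nhdsWithin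
  obtain ⟨s, hs, hgaps, hbounds⟩ := (hpos.and
    ((eventually_all.2 fun i => eventually_all.2 (hgap i)).and (eventually_all.2 hbound))).exists
  exact ⟨s, hs, hgaps, hbounds⟩

theorem abs_div_sqrt_sub_sqrt_le_of_abs_sub_le {p n k l N : ℕ}
    {A B : Matrix (Fin p) (Fin p) ℝ} (hA : A.IsHermitian) {D d : Fin n → ℝ}
    (hd₀ : ∀ i, 0 ≤ d i) (hd : Antitone d)
    (hAc : A.charpoly = (∏ i, (X - C (d i ^ 2 / N))) * X ^ k)
    (hBc : B.charpoly = (∏ i, (X - C (D i))) * X ^ l) {s : ℝ} (hs : 0 ≤ s)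
    (hAB : ∀ a b, |A a b - B a b| ≤ s) (hgap : ∀ i j, i < j → 2 * (p * s) < D i - D j)
    (hpos : ∀ i, p * s < D i) (i : Fin n) : |d i / √N - √(D i)| ≤ p * s / √(D i) := by
  have hDi : 0 < D i := (by positivity : (0 : ℝ) ≤ p * s).trans_lt (hpos i)
  have he : Antitone fun i => d i ^ 2 / N := fun i j hij => by
    dsimp only
    gcongr
    exacts [hd₀ j, hd hij]
  rw [← Real.sqrt_sq (hd₀ i), ← Real.sqrt_div' _ (Nat.cast_nonneg N)]
  calc |√(d i ^ 2 / N) - √(D i)| ≤ |d i ^ 2 / N - D i| / √(D i) :=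
        abs_sqrt_sub_sqrt_le (by positivity) hDi
    _ ≤ p * s / √(D i) := by
        gcongr
        exact abs_sub_le_of_charpoly_eq_of_abs_sub_le hA he hAc hBc hs hAB hgap hpos i

theorem singular_value_consistency_general
    {Ω : Type*} [MeasurableSpace Ω] (μ : Measure Ω) [IsProbabilityMeasure μ]
    (p n : ℕ) (κ : ℝ)
    (S : ℕ → Ω → Fin p → ℝ)
    (hindep : iIndepFun S μ)
    (hident : ∀ i, IdentDistrib (S i) (S 0) μ μ)
    (hbound : ∀ i, ∀ᵐ ω ∂μ, Real.sqrt (∑ k, (S i ω k) ^ 2) ≤ κ)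
    (M : Matrix (Fin p) (Fin p) ℝ)
    (hM : ∀ a b, M a b = ∫ ω, S 0 ω a * S 0 ω b ∂μ)
    (D : Fin n → ℝ) (hDpos : ∀ i, 0 < D i) (hDanti : StrictAnti D)
    (hMeig : M.charpoly = (∏ i : Fin n, (X - C (D i))) * X ^ (p - n))
    (d : (N : ℕ) → Ω → Fin n → ℝ)
    (hd0 : ∀ N ω i, 0 ≤ d N ω i)
    (hdanti : ∀ N ω, Antitone (d N ω))
    (hdchar : ∀ (N : ℕ) (ω : Ω),
      (Matrix.of fun a b : Fin p =>
          (N : ℝ)⁻¹ * ∑ i ∈ Finset.range N, S i ω a * S i ω b).charpoly =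
        (∏ i : Fin n, (X - C ((d N ω i) ^ 2 / N))) * X ^ (p - n)) :
    ∀ ε : ℝ, 0 < ε → ∃ C : ℝ, 0 < C ∧ ∃ c : ℝ, 0 < c ∧ ∀ N : ℕ, 1 ≤ N →
      μ {ω | ∃ i : Fin n, ε < |d N ω i / Real.sqrt N - Real.sqrt (D i)|} ≤
        ENNReal.ofReal (C * (N : ℝ) ^ (-c)) := by
  intro ε hε
  obtain ⟨s, hs, hgap, hsmall⟩ := hDanti.exists_pos_forall_lt (c := p)
    (f := fun i => min (D i) (ε * √(D i))) fun i => by have := hDpos i; positivity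
  refine ⟨p ^ 2 * (κ ^ 2) ^ 2 / s ^ 2 + 1, by positivity, 1, one_pos, fun N hN => ?_⟩
  have hsub : {ω | ∃ i : Fin n, ε < |d N ω i / √N - √(D i)|} ⊆
      {ω | ∃ a b, s ≤ |sampleSecondMoment S N ω a b - ∫ ω', S 0 ω' a * S 0 ω' b ∂μ|} := by
    rintro ω ⟨i, hi⟩
    by_contra! hclose
    simp only [Set.mem_ofPred_eq, not_exists, not_le] at hclose
    refine hi.not_ge ((abs_div_sqrt_sub_sqrt_le_of_abs_sub_le
      (isHermitian_sampleSecondMoment S N ω) (hd0 N ω) (hdanti N ω) (hdchar N ω) hMeig hs.le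
      (fun a b => hM a b ▸ (hclose a b).le) hgap
      (fun i => (hsmall i).trans_le (min_le_left _ _)) i).trans ?_)
    rw [div_le_iff₀ (Real.sqrt_pos.2 (hDpos i))]
    exact ((hsmall i).trans_le (min_le_right _ _)).le
  calc μ {ω | ∃ i : Fin n, ε < |d N ω i / √N - √(D i)|}
      ≤ ENNReal.ofReal (p ^ 2 * (κ ^ 2) ^ 2 / (N * s ^ 2)) := by
        simpa using (measure_mono hsub).trans
          (meas_exists_le_abs_sampleSecondMoment_sub_le hindep hident hbound (by omega) hs)
    _ ≤ ENNReal.ofReal ((p ^ 2 * (κ ^ 2) ^ 2 / s ^ 2 + 1) * (N : ℝ) ^ (-1 : ℝ)) := by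
        rw [Real.rpow_neg_one, ← div_eq_mul_inv, mul_comm (N : ℝ), ← div_div]
        gcongr
        exact le_add_of_nonneg_right zero_le_one

/-- Let `S_1, S_2, …` be i.i.d. centered random vectors in `ℝ^p`,
bounded by `κ` in Euclidean norm, whose second-moment matrix `M` has rank `n` with
simple nonzero eigenvalues `D_1 > … > D_n > 0` (encoded via its characteristic
polynomial).  For each `N`, let `d N ω : Fin n → ℝ` list (in nonincreasing order) the
nonzero singular values of `S_samp = [S_1, …, S_N]`, so that the nonzero eigenvalues of
`M̂ = (1/N) S_samp S_sampᵀ` are `d_i²/N` (again encoded via the characteristic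
polynomial).  Then for every `ε > 0` there are `C, c > 0` so that for all `N ≥ 1`,
`Pr(max_i |d_i/√N − √(D_i)| > ε) ≤ C N^{−c}`. -/
theorem singular_value_consistency
    {Ω : Type*} [MeasurableSpace Ω] (μ : Measure Ω) [IsProbabilityMeasure μ]
    (p n : ℕ) (hnp : n ≤ p) (κ : ℝ)
    (S : ℕ → Ω → Fin p → ℝ) (hmeas : ∀ i, Measurable (S i))
    (hindep : iIndepFun S μ)
    (hident : ∀ i, IdentDistrib (S i) (S 0) μ μ)
    (hcent : ∀ k, ∫ ω, S 0 ω k ∂μ = 0)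
    (hbound : ∀ i, ∀ᵐ ω ∂μ, Real.sqrt (∑ k, (S i ω k) ^ 2) ≤ κ)
    (M : Matrix (Fin p) (Fin p) ℝ)
    (hM : ∀ a b, M a b = ∫ ω, S 0 ω a * S 0 ω b ∂μ)
    (D : Fin n → ℝ) (hDpos : ∀ i, 0 < D i) (hDanti : StrictAnti D)
    (hMeig : M.charpoly = (∏ i : Fin n, (X - C (D i))) * X ^ (p - n))
    (d : (N : ℕ) → Ω → Fin n → ℝ)
    (hd0 : ∀ N ω i, 0 ≤ d N ω i)
    (hdanti : ∀ N ω, Antitone (d N ω))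
    (hdchar : ∀ (N : ℕ) (ω : Ω),
      (Matrix.of fun a b : Fin p =>
          (N : ℝ)⁻¹ * ∑ i ∈ Finset.range N, S i ω a * S i ω b).charpoly =
        (∏ i : Fin n, (X - C ((d N ω i) ^ 2 / N))) * X ^ (p - n)) :
    ∀ ε : ℝ, 0 < ε → ∃ C : ℝ, 0 < C ∧ ∃ c : ℝ, 0 < c ∧ ∀ N : ℕ, 1 ≤ N →
      μ {ω | ∃ i : Fin n, ε < |d N ω i / Real.sqrt N - Real.sqrt (D i)|} ≤
        ENNReal.ofReal (C * (N : ℝ) ^ (-c)) :=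
  singular_value_consistency_general μ p n κ S hindep hident hbound M hM D hDpos hDanti hMeig d hd0
    hdanti hdchar
end

section
/- Let S_1, S_2, … be an i.i.d. sequence of random vectors in ℝ^p with E[S_i] = 0 and ‖S_i‖₂ ≤ κ almost surely, whose second-moment matrix M = E[S_i S_iᵀ] has rank n with simple nonzero eigenvalues D_1 > … > D_n > 0. Then there exist constants C, c > 0 such that for all N, with probability at least 1 − N^{−c}, every unit right singular vector v ∈ ℝ^N of S_samp = [S_1, …, S_N] associated with any of the n largest singular values satisfies max_{1≤j≤N} |v(j)| ≤ C √(log N) / √N. -/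
/-!
Let `A_N = N⁻¹ S_samp S_sampᵀ`, whose nonzero eigenvalues are `d_i² / N`. If `v` is a unit right
singular vector for `d_i`, then `d_i² v(j)` is the inner product of the column `S_j` with
`S_samp v`, and `‖S_samp v‖² = d_i²`; Cauchy–Schwarz and `‖S_j‖ ≤ κ` give `d_i² v(j)² ≤ κ²`. So it
suffices that `d_i² / N ≥ δ` for a fixed `δ > 0`.

That holds whenever `A_N` is entrywise `ε`-close to `M`. With `t > 0` small, `det (A_N + t)` is then
close to `det (M + t) = t^(p-n) ∏ (D_i + t)`, so `∏ (d_i² / N + t)` is bounded below; since every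
eigenvalue of `A_N` is at most `κ²`, each single factor is bounded below too. By Chebyshev's
inequality for the i.i.d. bounded products `S_j(a) S_j(b)`, `A_N` is entrywise `ε`-close to `M` with
probability at least `1 - p² κ⁴ / (ε² N)`, which is at least `1 - N^(-1/2)` once `N ≥ (p² κ⁴/ε²)²`.
For smaller `N` the claimed bound exceeds `1` and holds trivially.
-/

open MeasureTheory ProbabilityTheory Matrix Polynomial

theorem abs_le_one_of_sum_sq_eq_one {ι : Type*} [Fintype ι] {v : ι → ℝ} (hv : ∑ k, v k ^ 2 = 1)
    (j : ι) : |v j| ≤ 1 :=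
  Real.abs_le_sqrt (hv ▸ Finset.single_le_sum (fun k _ => sq_nonneg (v k)) (Finset.mem_univ j))
    |>.trans_eq Real.sqrt_one

theorem div_pow_card_sub_one_le_of_le_prod {ι : Type*} [Fintype ι] {f : ι → ℝ} {c K : ℝ}
    (hf : ∀ i, 0 < f i) (hfK : ∀ i, f i ≤ K) (hc : c ≤ ∏ i, f i) (i : ι) :
    c / K ^ (Fintype.card ι - 1) ≤ f i := by
  classical
  rw [div_le_iff₀ (pow_pos ((hf i).trans_le (hfK i)) _)]
  calc c ≤ ∏ i, f i := hc
    _ = f i * ∏ j ∈ Finset.univ.erase i, f j :=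
        (Finset.mul_prod_erase _ _ (Finset.mem_univ i)).symm
    _ ≤ f i * ∏ _j ∈ Finset.univ.erase i, K :=
        mul_le_mul_of_nonneg_left (Finset.prod_le_prod (fun j _ => (hf j).le) fun j _ => hfK j)
          (hf i).le
    _ = f i * K ^ (Fintype.card ι - 1) := by
        rw [Finset.prod_const, Finset.card_erase_of_mem (Finset.mem_univ i), Finset.card_univ]

theorem le_of_abs_prod_add_sub_prod_add_lt {ι : Type*} [Fintype ι] {D r : ι → ℝ} {K t : ℝ}
    (hD : ∀ i, 0 < D i) (hr : ∀ i, 0 ≤ r i) (hrK : ∀ i, r i + 1 ≤ K) (ht : 0 < t) (ht1 : t ≤ 1)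
    (htQ : t ≤ (∏ i, D i) / (4 * K ^ (Fintype.card ι - 1)))
    (h : |∏ i, (r i + t) - ∏ i, (D i + t)| < (∏ i, D i) / 2) (i : ι) :
    (∏ i, D i) / (4 * K ^ (Fintype.card ι - 1)) ≤ r i := by
  have hDt : ∏ i, D i ≤ ∏ i, (D i + t) :=
    Finset.prod_le_prod (fun i _ => (hD i).le) fun i _ => le_add_of_nonneg_right ht.le
  have hrt : (∏ i, D i) / 2 ≤ ∏ i, (r i + t) := by linarith [(abs_lt.mp h).1]
  have hfactor := div_pow_card_sub_one_le_of_le_prod (K := K)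
    (fun i => add_pos_of_nonneg_of_pos (hr i) ht) (fun i => by linarith [hrK i]) hrt i
  have hhalf : (∏ i, D i) / 2 / K ^ (Fintype.card ι - 1) =
      2 * ((∏ i, D i) / (4 * K ^ (Fintype.card ι - 1))) := by ring
  linarith

namespace Matrix

variable {m n ι : Type*} [Fintype m] [Fintype n] [Fintype ι]

theorem det_add_smul_one_of_charpoly_eq {R : Type*} [CommRing R] [Nontrivial R] [DecidableEq m]
    {A : Matrix m m R} {r : ι → R} {k : ℕ}
    (hA : A.charpoly = (∏ i, (X - C (r i))) * X ^ k) (t : R) :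
    (A + t • 1).det = (∏ i, (r i + t)) * t ^ k := by
  have hcard : Fintype.card m = Fintype.card ι + k := by
    rw [← A.charpoly_natDegree_eq_dim, hA,
      (monic_prod_of_monic _ _ fun i _ => monic_X_sub_C (r i)).natDegree_mul (monic_X_pow k),
      natDegree_finsetProd_X_sub_C_eq_card, natDegree_X_pow, Finset.card_univ]
  have h := A.eval_charpoly (-t)
  rw [hA, show scalar m (-t) - A = -(A + t • 1) by
    rw [scalar_apply, ← smul_one_eq_diagonal, neg_smul]; abel, det_neg] at h
  simp only [eval_mul, eval_prod, eval_pow, eval_sub, eval_X, eval_C] at h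
  rw [show ∏ i, (-t - r i) = ∏ i, (-1 * (r i + t)) from Finset.prod_congr rfl fun _ _ => by ring,
    Finset.prod_mul_distrib, Finset.prod_const, Finset.card_univ, neg_pow t, hcard, pow_add] at h
  refine ((isUnit_neg_one.pow (Fintype.card ι)).mul (isUnit_neg_one.pow k)).mul_left_cancel ?_
  linear_combination h.symm

theorem exists_mulVec_eq_smul_of_isRoot_charpoly {K : Type*} [Field K] [DecidableEq m]
    {A : Matrix m m K} {r : K} (hr : A.charpoly.IsRoot r) : ∃ v ≠ 0, A *ᵥ v = r • v := by
  rw [IsRoot, eval_charpoly, ← exists_mulVec_eq_zero_iff] at hr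
  obtain ⟨v, hv, hAv⟩ := hr
  rw [scalar_apply, ← smul_one_eq_diagonal, sub_mulVec, smul_mulVec, one_mulVec,
    sub_eq_zero] at hAv
  exact ⟨v, hv, hAv.symm⟩

theorem transpose_mulVec_dotProduct_self_eq {S : Matrix m n ℝ} {v : m → ℝ} {r : ℝ}
    (h : (S * Sᵀ) *ᵥ v = r • v) : (Sᵀ *ᵥ v) ⬝ᵥ (Sᵀ *ᵥ v) = r * (v ⬝ᵥ v) := by
  calc (Sᵀ *ᵥ v) ⬝ᵥ (Sᵀ *ᵥ v) = (v ᵥ* S) ⬝ᵥ (Sᵀ *ᵥ v) := by rw [mulVec_transpose]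
    _ = r * (v ⬝ᵥ v) := by rw [← dotProduct_mulVec, mulVec_mulVec, h, dotProduct_smul, smul_eq_mul]

theorem le_sum_sq_of_mul_transpose_mulVec_eq_smul {S : Matrix m n ℝ} {v : m → ℝ} (hv : v ≠ 0)
    {r : ℝ} (h : (S * Sᵀ) *ᵥ v = r • v) : r ≤ ∑ j, ∑ a, S a j ^ 2 := by
  have hvv : 0 < v ⬝ᵥ v := by simpa using dotProduct_self_star_pos_iff.mpr hv
  have hcs : ∀ j, (Sᵀ *ᵥ v) j ^ 2 ≤ (v ⬝ᵥ v) * ∑ a, S a j ^ 2 := fun j => by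
    simpa [mulVec, dotProduct, sq, mul_comm] using
      Finset.sum_mul_sq_le_sq_mul_sq Finset.univ v (fun a => S a j)
  refine le_of_mul_le_mul_right ?_ hvv
  calc r * (v ⬝ᵥ v) = ∑ j, (Sᵀ *ᵥ v) j ^ 2 := by
        rw [← transpose_mulVec_dotProduct_self_eq h]; simp [dotProduct, sq]
    _ ≤ ∑ j, (v ⬝ᵥ v) * ∑ a, S a j ^ 2 := Finset.sum_le_sum fun j _ => hcs j
    _ = (∑ j, ∑ a, S a j ^ 2) * (v ⬝ᵥ v) := by rw [← Finset.mul_sum, mul_comm]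

theorem le_of_isRoot_charpoly_smul_mul_transpose [DecidableEq m] {N : ℕ} (hN : 0 < N)
    {S : Matrix m (Fin N) ℝ} {B : ℝ} (hcol : ∀ j, ∑ a, S a j ^ 2 ≤ B) {r : ℝ}
    (hr : ((N : ℝ)⁻¹ • (S * Sᵀ)).charpoly.IsRoot r) : r ≤ B := by
  obtain ⟨v, hv, hAv⟩ := exists_mulVec_eq_smul_of_isRoot_charpoly hr
  have hN' : (0 : ℝ) < N := Nat.cast_pos.mpr hN
  have heig : (S * Sᵀ) *ᵥ v = (N * r) • v := by
    rw [smul_mulVec] at hAv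
    rw [mul_smul, ← hAv, smul_smul, mul_inv_cancel₀ hN'.ne', one_smul]
  have hsum : ∑ j, ∑ a, S a j ^ 2 ≤ N * B := by
    simpa using Finset.sum_le_sum fun j (_ : j ∈ Finset.univ) => hcol j
  nlinarith [le_sum_sq_of_mul_transpose_mulVec_eq_smul hv heig]

theorem mul_sq_le_of_transpose_mul_mulVec_eq_smul {S : Matrix m n ℝ} {v : n → ℝ} {e : ℝ}
    (h : (Sᵀ * S) *ᵥ v = e • v) (j : n) : e * v j ^ 2 ≤ (∑ a, S a j ^ 2) * ∑ k, v k ^ 2 := by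
  rcases le_or_gt e 0 with he | he
  · exact (mul_nonpos_of_nonpos_of_nonneg he (sq_nonneg _)).trans (by positivity)
  have hw : (S *ᵥ v) ⬝ᵥ (S *ᵥ v) = e * ∑ k, v k ^ 2 := by
    simpa [dotProduct, sq] using transpose_mulVec_dotProduct_self_eq (S := Sᵀ) (by simpa using h)
  have hcoord : e * v j = ∑ a, S a j * (S *ᵥ v) a := by
    rw [← smul_eq_mul, ← Pi.smul_apply, ← h, ← mulVec_mulVec]; rfl
  have hcs : (e * v j) ^ 2 ≤ (∑ a, S a j ^ 2) * (e * ∑ k, v k ^ 2) := by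
    rw [hcoord, ← hw]
    simpa [dotProduct, sq] using
      Finset.sum_mul_sq_le_sq_mul_sq Finset.univ (fun a => S a j) (S *ᵥ v)
  nlinarith

theorem abs_apply_le_sqrt_div_of_transpose_mul_mulVec_eq_smul {S : Matrix m n ℝ} {v : n → ℝ}
    {e θ B : ℝ} (hθ : 0 < θ) (he : θ ≤ e) {j : n} (hcol : ∑ a, S a j ^ 2 ≤ B)
    (hv : ∑ k, v k ^ 2 = 1) (h : (Sᵀ * S) *ᵥ v = e • v) : |v j| ≤ √(B / θ) := by
  refine Real.abs_le_sqrt ((le_div_iff₀' hθ).mpr ?_)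
  have hej := mul_sq_le_of_transpose_mul_mulVec_eq_smul h j
  rw [hv, mul_one] at hej
  calc θ * v j ^ 2 ≤ e * v j ^ 2 := by gcongr
    _ ≤ B := hej.trans hcol

theorem exists_pos_forall_abs_det_sub_lt [DecidableEq m] (M : Matrix m m ℝ) {η : ℝ}
    (hη : 0 < η) :
    ∃ ε > 0, ∀ A : Matrix m m ℝ, (∀ a b, |A a b - M a b| < ε) → |A.det - M.det| < η := by
  have hcont : Continuous fun x : m → m → ℝ => (Matrix.of x).det := continuous_id.matrix_det
  obtain ⟨ε, hε, hball⟩ := Metric.continuousAt_iff.mp hcont.continuousAt η hη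
  refine ⟨ε, hε, fun A hA => ?_⟩
  have hdist : dist (fun a b => A a b) (fun a b => M a b) < ε := by
    refine (dist_pi_lt_iff hε).mpr fun a => (dist_pi_lt_iff hε).mpr fun b => ?_
    simpa [Real.dist_eq] using hA a b
  have := hball hdist
  rwa [Real.dist_eq] at this

theorem exists_pos_forall_le_of_charpoly_eq [DecidableEq m] {M : Matrix m m ℝ} {D : ι → ℝ} {k : ℕ}
    (hD : ∀ i, 0 < D i) (hM : M.charpoly = (∏ i, (X - C (D i))) * X ^ k) (B : ℝ) :
    ∃ δ > 0, ∃ ε > 0, ∀ (A : Matrix m m ℝ) (r : ι → ℝ),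
      A.charpoly = (∏ i, (X - C (r i))) * X ^ k → (∀ i, 0 ≤ r i) → (∀ i, r i ≤ B) →
      (∀ a b, |A a b - M a b| < ε) → ∀ i, δ ≤ r i := by
  set Q := ∏ i, D i
  have hQ : 0 < Q := Finset.prod_pos fun i _ => hD i
  set K := |B| + 1
  set δ := Q / (4 * K ^ (Fintype.card ι - 1))
  have hδ : 0 < δ := by positivity
  set t := min 1 δ
  have ht : 0 < t := lt_min one_pos hδ
  obtain ⟨ε, hε, hdet⟩ :=
    (M + t • 1).exists_pos_forall_abs_det_sub_lt (η := Q * t ^ k / 2) (by positivity)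
  refine ⟨δ, hδ, ε, hε, fun A r hA hr0 hrB hclose => le_of_abs_prod_add_sub_prod_add_lt hD hr0
    (fun i => by linarith [hrB i, le_abs_self B]) ht (min_le_left _ _) (min_le_right _ _) ?_⟩
  have hdetA := hdet (A + t • 1) fun a b => by simpa using hclose a b
  rw [det_add_smul_one_of_charpoly_eq hA, det_add_smul_one_of_charpoly_eq hM, ← sub_mul, abs_mul,
    abs_of_pos (pow_pos ht k), mul_div_right_comm] at hdetA
  exact lt_of_mul_lt_mul_right hdetA (pow_pos ht k).le

end Matrix

section EmpiricalSecondMoment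

variable {Ω m : Type*}

noncomputable def empiricalSecondMoment (S : ℕ → Ω → m → ℝ) (N : ℕ) (ω : Ω) : Matrix m m ℝ :=
  Matrix.of fun a b => (N : ℝ)⁻¹ * ∑ j ∈ Finset.range N, S j ω a * S j ω b

theorem smul_mul_transpose_eq_empiricalSecondMoment {S : ℕ → Ω → m → ℝ} {N : ℕ}
    {Sm : Matrix m (Fin N) ℝ} {ω : Ω} (h : ∀ a j, Sm a j = S j ω a) :
    (N : ℝ)⁻¹ • (Sm * Smᵀ) = empiricalSecondMoment S N ω := by
  ext a b
  simp [empiricalSecondMoment, mul_apply, h, Fin.sum_univ_eq_sum_range (fun j => S j ω a * S j ω b)]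

end EmpiricalSecondMoment

namespace ProbabilityTheory

variable {Ω : Type*} [MeasurableSpace Ω] {μ : Measure Ω}

theorem measure_le_abs_average_sub_le [IsFiniteMeasure μ] {X : ℕ → Ω → ℝ}
    (hX : MemLp (X 0) 2 μ) (hindep : Pairwise fun i j => IndepFun (X i) (X j) μ)
    (hident : ∀ j, IdentDistrib (X j) (X 0) μ μ) {N : ℕ} (hN : 0 < N) {ε : ℝ} (hε : 0 < ε) :
    μ {ω | ε ≤ |(N : ℝ)⁻¹ * ∑ j ∈ Finset.range N, X j ω - μ[X 0]|} ≤
      ENNReal.ofReal (variance (X 0) μ / (N * ε ^ 2)) := by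
  have hN' : (0 : ℝ) < N := Nat.cast_pos.mpr hN
  have hXj : ∀ j, MemLp (X j) 2 μ := fun j => (hident j).symm.memLp_snd hX
  set T := ∑ j ∈ Finset.range N, X j
  have hT : MemLp T 2 μ := memLp_finsetSum' _ fun j _ => hXj j
  have hmean : μ[T] = (N : ℝ) * μ[X 0] := by
    simp only [T, Finset.sum_apply]
    rw [integral_finsetSum _ fun j _ => (hXj j).integrable one_le_two]
    simp [(hident _).integral_eq]
  have hvar : variance T μ = (N : ℝ) * variance (X 0) μ := by
    rw [IndepFun.variance_sum (fun j _ => hXj j) fun i _ j _ hij => hindep hij]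
    simp [(hident _).variance_eq]
  calc μ {ω | ε ≤ |(N : ℝ)⁻¹ * ∑ j ∈ Finset.range N, X j ω - μ[X 0]|}
      = μ {ω | N * ε ≤ |T ω - μ[T]|} := by
        congr 1; ext ω
        have hω : T ω - μ[T] = N * ((N : ℝ)⁻¹ * ∑ j ∈ Finset.range N, X j ω - μ[X 0]) := by
          rw [hmean]; simp only [T, Finset.sum_apply]; field_simp
        simp only [Set.mem_ofPred_eq]
        rw [hω, abs_mul, abs_of_pos hN', mul_le_mul_iff_of_pos_left hN']
    _ ≤ ENNReal.ofReal (variance T μ / (N * ε) ^ 2) :=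
        meas_ge_le_variance_div_sq hT (by positivity)
    _ = ENNReal.ofReal (variance (X 0) μ / (N * ε ^ 2)) := by
        rw [hvar]; congr 1; field_simp

variable {m : Type*} [Fintype m] {S : ℕ → Ω → m → ℝ}

theorem measure_le_abs_empiricalSecondMoment_sub_le [IsProbabilityMeasure μ]
    (hmeas : ∀ i, Measurable (S i)) (hindep : iIndepFun S μ)
    (hident : ∀ i, IdentDistrib (S i) (S 0) μ μ) {B : ℝ}
    (hbound : ∀ᵐ ω ∂μ, ∑ k, S 0 ω k ^ 2 ≤ B) (a b : m) {N : ℕ} (hN : 0 < N) {ε : ℝ}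
    (hε : 0 < ε) :
    μ {ω | ε ≤ |empiricalSecondMoment S N ω a b - μ[fun ω => S 0 ω a * S 0 ω b]|} ≤
      ENNReal.ofReal (B ^ 2 / (N * ε ^ 2)) := by
  set g : (m → ℝ) → ℝ := fun x => x a * x b
  have hg : Measurable g := (measurable_pi_apply a).mul (measurable_pi_apply b)
  have hX0 : ∀ᵐ ω ∂μ, g (S 0 ω) ∈ Set.Icc (-B) B := by
    filter_upwards [hbound] with ω hω
    have hsq : ∀ k, S 0 ω k ^ 2 ≤ B := fun k =>
      (Finset.single_le_sum (fun l _ => sq_nonneg (S 0 ω l)) (Finset.mem_univ k)).trans hω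
    refine abs_le.mp ?_
    have := hsq a; have := hsq b
    rw [abs_mul]
    nlinarith [sq_abs (S 0 ω a), sq_abs (S 0 ω b), abs_nonneg (S 0 ω a), abs_nonneg (S 0 ω b)]
  have hvar : variance (fun ω => g (S 0 ω)) μ ≤ B ^ 2 := by
    simpa using variance_le_sq_of_bounded hX0 (hg.comp (hmeas 0)).aemeasurable
  refine (measure_le_abs_average_sub_le (X := fun j ω => g (S j ω))
    (MemLp.of_bound (hg.comp (hmeas 0)).aestronglyMeasurable B ?_)
    (fun i j hij => (hindep.indepFun hij).comp hg hg) (fun j => (hident j).comp hg) hN hε).trans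
    (ENNReal.ofReal_le_ofReal (by gcongr))
  filter_upwards [hX0] with ω hω using abs_le.mpr hω

theorem one_sub_le_measure_forall_abs_empiricalSecondMoment_sub_lt [IsProbabilityMeasure μ]
    (hmeas : ∀ i, Measurable (S i)) (hindep : iIndepFun S μ)
    (hident : ∀ i, IdentDistrib (S i) (S 0) μ μ) {B : ℝ}
    (hbound : ∀ᵐ ω ∂μ, ∑ k, S 0 ω k ^ 2 ≤ B) {N : ℕ} (hN : 0 < N) {ε : ℝ} (hε : 0 < ε) :
    1 - ENNReal.ofReal (Fintype.card m ^ 2 * B ^ 2 / ε ^ 2 / N) ≤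
      μ {ω | ∀ a b, |empiricalSecondMoment S N ω a b - μ[fun ω => S 0 ω a * S 0 ω b]| < ε} := by
  set G := {ω | ∀ a b, |empiricalSecondMoment S N ω a b - μ[fun ω => S 0 ω a * S 0 ω b]| < ε}
  have hGc : Gᶜ = ⋃ a, ⋃ b,
      {ω | ε ≤ |empiricalSecondMoment S N ω a b - μ[fun ω => S 0 ω a * S 0 ω b]|} := by
    ext ω; simp [G]
  have hbad : μ Gᶜ ≤ ENNReal.ofReal (Fintype.card m ^ 2 * B ^ 2 / ε ^ 2 / N) := by
    calc μ Gᶜ ≤ ∑ a, ∑ b,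
          μ {ω | ε ≤ |empiricalSecondMoment S N ω a b - μ[fun ω => S 0 ω a * S 0 ω b]|} := by
          rw [hGc]
          exact (measure_iUnion_fintype_le _ _).trans
            (Finset.sum_le_sum fun a _ => measure_iUnion_fintype_le _ _)
      _ ≤ ∑ _a : m, ∑ _b : m, ENNReal.ofReal (B ^ 2 / (N * ε ^ 2)) := by
          gcongr with a _ b _
          exact measure_le_abs_empiricalSecondMoment_sub_le hmeas hindep hident hbound a b hN hε
      _ = ENNReal.ofReal (Fintype.card m ^ 2 * B ^ 2 / ε ^ 2 / N) := by
          rw [div_div, mul_comm (ε ^ 2), mul_div_assoc, ENNReal.ofReal_mul (by positivity)]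
          simp [sq, mul_assoc]
  rw [tsub_le_iff_right]
  calc 1 = μ Set.univ := measure_univ.symm
    _ ≤ μ G + μ Gᶜ := measure_univ_le_add_compl G
    _ ≤ _ := by gcongr

end ProbabilityTheory

theorem div_le_rpow_neg_half_of_sq_le {R x : ℝ} (hx : 0 < x) (hR : R ^ 2 ≤ x) :
    R / x ≤ x ^ (-(1 / 2 : ℝ)) := by
  rw [Real.rpow_neg hx.le, ← Real.sqrt_eq_rpow, div_le_iff₀ hx]
  calc R ≤ √x := Real.le_sqrt_of_sq_le hR
    _ = (√x)⁻¹ * x := by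
      rw [eq_inv_mul_iff_mul_eq₀ (Real.sqrt_pos.mpr hx).ne', Real.mul_self_sqrt hx.le]

theorem exists_sqrt_log_rate_of_tail_le {Ω : Type*} [MeasurableSpace Ω] {μ : Measure Ω}
    [IsProbabilityMeasure μ] (E : ℕ → ℝ → Set Ω) (hmono : ∀ N, Monotone (E N))
    (huniv : ∀ N b, 1 ≤ b → E N b = Set.univ) (K R : ℝ)
    (htail : ∀ N : ℕ, 0 < N → 1 - ENNReal.ofReal (R / N) ≤ μ (E N (K / √N))) :
    ∃ C : ℝ, 0 < C ∧ ∃ c : ℝ, 0 < c ∧ ∀ N : ℕ, 1 ≤ N →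
      1 - ENNReal.ofReal ((N : ℝ) ^ (-c)) ≤ μ (E N (C * √(Real.log N) / √N)) := by
  set N₀ : ℕ := ⌈R ^ 2⌉₊ + 2
  have hlog2 : 0 < √(Real.log 2) := Real.sqrt_pos.mpr (Real.log_pos one_lt_two)
  set C := max K √N₀ / √(Real.log 2)
  have hC : 0 < C := div_pos (lt_max_of_lt_right (Real.sqrt_pos.mpr (by positivity))) hlog2
  refine ⟨C, hC, 1 / 2, one_half_pos, fun N hN => ?_⟩
  rcases hN.eq_or_lt with rfl | hN2
  · simp
  have hN0 : (0 : ℝ) < N := by positivity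
  have hCN : max K √N₀ ≤ C * √(Real.log N) := by
    calc max K √N₀ = C * √(Real.log 2) := (div_mul_cancel₀ _ hlog2.ne').symm
      _ ≤ C * √(Real.log N) := by
        gcongr
        exact_mod_cast hN2
  rcases lt_or_ge N N₀ with hsmall | hlarge
  · rw [huniv, measure_univ]
    · exact tsub_le_self
    rw [le_div_iff₀ (Real.sqrt_pos.mpr hN0), one_mul]
    calc √N ≤ √N₀ := Real.sqrt_le_sqrt (by exact_mod_cast hsmall.le)
      _ ≤ max K √N₀ := le_max_right _ _
      _ ≤ C * √(Real.log N) := hCN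
  calc 1 - ENNReal.ofReal ((N : ℝ) ^ (-(1 / 2 : ℝ)))
      ≤ 1 - ENNReal.ofReal (R / N) := by
        gcongr
        refine div_le_rpow_neg_half_of_sq_le hN0 ((Nat.le_ceil _).trans ?_)
        exact_mod_cast (Nat.le_add_right _ _).trans hlarge
    _ ≤ μ (E N (K / √N)) := htail N (by omega)
    _ ≤ μ (E N (C * √(Real.log N) / √N)) :=
        measure_mono (hmono N (by gcongr; exact (le_max_left _ _).trans hCN))

theorem right_singular_vector_delocalization_general
    {Ω : Type*} [MeasurableSpace Ω] (μ : Measure Ω) [IsProbabilityMeasure μ]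
    (p n : ℕ) (κ : ℝ)
    (S : ℕ → Ω → Fin p → ℝ) (hmeas : ∀ i, Measurable (S i))
    (hindep : iIndepFun S μ)
    (hident : ∀ i, IdentDistrib (S i) (S 0) μ μ)
    (hbound : ∀ i, ∀ᵐ ω ∂μ, Real.sqrt (∑ k, (S i ω k) ^ 2) ≤ κ)
    (M : Matrix (Fin p) (Fin p) ℝ)
    (hM : ∀ a b, M a b = ∫ ω, S 0 ω a * S 0 ω b ∂μ)
    (D : Fin n → ℝ) (hDpos : ∀ i, 0 < D i)
    (hMeig : M.charpoly = (∏ i : Fin n, (X - C (D i))) * X ^ (p - n))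
    (Smat : (N : ℕ) → Ω → Matrix (Fin p) (Fin N) ℝ)
    (hSmat : ∀ (N : ℕ) (ω : Ω) (a : Fin p) (j : Fin N), Smat N ω a j = S j ω a)
    (d : (N : ℕ) → Ω → Fin n → ℝ)
    (hdchar : ∀ (N : ℕ) (ω : Ω),
      ((N : ℝ)⁻¹ • (Smat N ω * (Smat N ω)ᵀ)).charpoly =
        (∏ i : Fin n, (X - C ((d N ω i) ^ 2 / N))) * X ^ (p - n)) :
    ∃ C : ℝ, 0 < C ∧ ∃ c : ℝ, 0 < c ∧ ∀ N : ℕ, 1 ≤ N →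
      1 - ENNReal.ofReal ((N : ℝ) ^ (-c)) ≤
        μ {ω | ∀ (i : Fin n) (v : Fin N → ℝ), (∑ j, (v j) ^ 2 = 1) →
          ((Smat N ω)ᵀ * Smat N ω).mulVec v = ((d N ω i) ^ 2) • v →
          ∀ j : Fin N, |v j| ≤ C * Real.sqrt (Real.log N) / Real.sqrt N} := by
  have hcol : ∀ i, ∀ᵐ ω ∂μ, ∑ k, S i ω k ^ 2 ≤ κ ^ 2 :=
    fun i => (hbound i).mono fun ω hω => (Real.sqrt_le_iff.mp hω).2
  obtain ⟨δ, hδ, ε, hε, hfloor⟩ := exists_pos_forall_le_of_charpoly_eq hDpos hMeig (κ ^ 2)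
  refine exists_sqrt_log_rate_of_tail_le (fun N b => {ω | ∀ (i : Fin n) (v : Fin N → ℝ),
      ∑ j, v j ^ 2 = 1 → ((Smat N ω)ᵀ * Smat N ω) *ᵥ v = d N ω i ^ 2 • v → ∀ j, |v j| ≤ b})
    (fun N b b' hb ω hω i v hv he j => (hω i v hv he j).trans hb)
    (fun N b hb => Set.eq_univ_of_forall fun ω i v hv _ j =>
      (abs_le_one_of_sum_sq_eq_one hv j).trans hb)
    √(κ ^ 2 / δ) (Fintype.card (Fin p) ^ 2 * (κ ^ 2) ^ 2 / ε ^ 2) fun N hN => ?_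
  refine (one_sub_le_measure_forall_abs_empiricalSecondMoment_sub_lt hmeas hindep hident (hcol 0)
    hN hε).trans (measure_mono_ae ?_)
  filter_upwards [ae_all_iff.2 hcol] with ω hcolω hclose i v hv heig j
  have hA := smul_mul_transpose_eq_empiricalSecondMoment (hSmat N ω)
  have hcolN : ∀ j, ∑ a, Smat N ω a j ^ 2 ≤ κ ^ 2 := fun j => by simpa only [hSmat] using hcolω j
  have hroot : ∀ i, d N ω i ^ 2 / N ≤ κ ^ 2 := fun i =>
    le_of_isRoot_charpoly_smul_mul_transpose hN hcolN (hdchar N ω ▸ root_mul_right_of_isRoot _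
      ((isRoot_prod _ _ _).mpr ⟨i, Finset.mem_univ _, root_X_sub_C.mpr rfl⟩))
  have hgap : δ * N ≤ d N ω i ^ 2 := (le_div_iff₀ (Nat.cast_pos.mpr hN)).mp
    (hfloor _ _ (hdchar N ω) (fun _ => by positivity) hroot
      (fun a b => by rw [hA, hM]; exact hclose a b) i)
  calc |v j| ≤ √(κ ^ 2 / (δ * N)) :=
        abs_apply_le_sqrt_div_of_transpose_mul_mulVec_eq_smul (by positivity) hgap (hcolN j) hv heig
    _ = √(κ ^ 2 / δ) / √N := by rw [← div_div, Real.sqrt_div' _ (Nat.cast_nonneg N)]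

/-- delocalization of right singular vectors.  In the setting of the
manifold signal model (i.i.d. bounded centered vectors whose second-moment matrix `M`
has simple nonzero eigenvalues `D_1 > … > D_n > 0`), there are `C, c > 0` such that for
all `N ≥ 1`, with probability at least `1 − N^{−c}`, every unit right singular vector
of `S_samp = [S_1, …, S_N]` associated with one of the `n` largest singular values
`d N ω i` satisfies `max_j |v(j)| ≤ C √(log N)/√N`. -/
theorem right_singular_vector_delocalization
    {Ω : Type*} [MeasurableSpace Ω] (μ : Measure Ω) [IsProbabilityMeasure μ]
    (p n : ℕ) (hnp : n ≤ p) (κ : ℝ)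
    (S : ℕ → Ω → Fin p → ℝ) (hmeas : ∀ i, Measurable (S i))
    (hindep : iIndepFun S μ)
    (hident : ∀ i, IdentDistrib (S i) (S 0) μ μ)
    (hcent : ∀ k, ∫ ω, S 0 ω k ∂μ = 0)
    (hbound : ∀ i, ∀ᵐ ω ∂μ, Real.sqrt (∑ k, (S i ω k) ^ 2) ≤ κ)
    (M : Matrix (Fin p) (Fin p) ℝ)
    (hM : ∀ a b, M a b = ∫ ω, S 0 ω a * S 0 ω b ∂μ)
    (D : Fin n → ℝ) (hDpos : ∀ i, 0 < D i) (hDanti : StrictAnti D)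
    (hMeig : M.charpoly = (∏ i : Fin n, (X - C (D i))) * X ^ (p - n))
    (Smat : (N : ℕ) → Ω → Matrix (Fin p) (Fin N) ℝ)
    (hSmat : ∀ (N : ℕ) (ω : Ω) (a : Fin p) (j : Fin N), Smat N ω a j = S j ω a)
    (d : (N : ℕ) → Ω → Fin n → ℝ)
    (hd0 : ∀ N ω i, 0 ≤ d N ω i)
    (hdanti : ∀ N ω, Antitone (d N ω))
    (hdchar : ∀ (N : ℕ) (ω : Ω),
      ((N : ℝ)⁻¹ • (Smat N ω * (Smat N ω)ᵀ)).charpoly =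
        (∏ i : Fin n, (X - C ((d N ω i) ^ 2 / N))) * X ^ (p - n)) :
    ∃ C : ℝ, 0 < C ∧ ∃ c : ℝ, 0 < c ∧ ∀ N : ℕ, 1 ≤ N →
      1 - ENNReal.ofReal ((N : ℝ) ^ (-c)) ≤
        μ {ω | ∀ (i : Fin n) (v : Fin N → ℝ), (∑ j, (v j) ^ 2 = 1) →
          ((Smat N ω)ᵀ * Smat N ω).mulVec v = ((d N ω i) ^ 2) • v →
          ∀ j : Fin N, |v j| ≤ C * Real.sqrt (Real.log N) / Real.sqrt N} :=
  right_singular_vector_delocalization_general μ p n κ S hmeas hindep hident hbound M hM D hDpos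
    hMeig Smat hSmat d hdchar
end
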